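/- arXiv:1012.1507 — 2 statements merged into one kernel-verified Lean document; each statement's English description precedes it below -/
import Mathlib

section
/- Let S be a nonempty finite set of nonzero integers. There exists a complex number ξ with |ξ| = 1 such that ξ^k = -1 for all k ∈ S if and only if all elements of S have the same 2-adic valuation. -/
/-!
Write `k = 2 ^ a * m` and `l = 2 ^ b * n` with `m, n` odd. If `ξ ^ k = ξ ^ l = -1` and `a < b`,
then `ξ ^ (l * m) = (-1) ^ m = -1`, while `l * m = k * (n * 2 ^ (b - a))` has an even cofactor
of `k`, so `ξ ^ (l * m) = 1`.
Conversely, if all valuations equal `a`, then `ξ = exp (π i / 2 ^ a)` satisfies `ξ ^ (2 ^ a) = -1`,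
hence `ξ ^ (2 ^ a * m) = -1` for every odd `m`.
-/

open Complex

theorem Int.exists_odd_eq_two_pow_padicValInt_mul {k : ℤ} (hk : k ≠ 0) :
    ∃ m, Odd m ∧ k = 2 ^ padicValInt 2 k * m := by
  obtain ⟨m, hm⟩ := padicValInt_dvd (p := 2) k
  refine ⟨m, Int.not_even_iff_odd.mp fun ⟨c, hc⟩ => ?_, by exact_mod_cast hm⟩
  have hdvd : ((2 : ℕ) : ℤ) ^ (padicValInt 2 k + 1) ∣ k :=
    ⟨c, by push_cast at hm ⊢; linear_combination hm + 2 ^ padicValInt 2 k * hc⟩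
  have := (padicValInt_dvd_iff (p := 2) _ k).mp hdvd
  omega

theorem padicValInt_two_le_of_zpow_eq_neg_one {α : Type*} [DivisionMonoid α] [HasDistribNeg α]
    (hα : (-1 : α) ≠ 1) {x : α} {k l : ℤ} (hk0 : k ≠ 0) (hl0 : l ≠ 0)
    (hk : x ^ k = -1) (hl : x ^ l = -1) : padicValInt 2 l ≤ padicValInt 2 k := by
  obtain ⟨m, hm, hkm⟩ := Int.exists_odd_eq_two_pow_padicValInt_mul hk0
  obtain ⟨n, -, hln⟩ := Int.exists_odd_eq_two_pow_padicValInt_mul hl0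
  by_contra! hlt
  obtain ⟨d, hd⟩ := Nat.exists_eq_add_of_lt hlt
  rw [hd] at hln
  have hlm : l * m = k * (n * 2 ^ (d + 1)) := by
    linear_combination m * hln - n * 2 ^ (d + 1) * hkm
  have heven : Even (n * 2 ^ (d + 1)) := (Int.even_pow.mpr ⟨even_two, d.succ_ne_zero⟩).mul_left n
  apply hα
  calc (-1 : α) = (x ^ l) ^ m := by rw [hl, hm.neg_one_zpow]
    _ = (x ^ k) ^ (n * 2 ^ (d + 1)) := by rw [← zpow_mul, hlm, zpow_mul]
    _ = 1 := by rw [hk, heven.neg_one_zpow]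

theorem Complex.exists_norm_eq_one_pow_two_pow_eq_neg_one (a : ℕ) :
    ∃ ξ : ℂ, ‖ξ‖ = 1 ∧ ξ ^ 2 ^ a = -1 := by
  refine ⟨exp ((Real.pi / 2 ^ a : ℝ) * I), norm_exp_ofReal_mul_I _, ?_⟩
  rw [← exp_nat_mul, ← exp_pi_mul_I]
  congr 1
  push_cast
  field_simp

/-- Let `S` be a nonempty finite set of nonzero integers. There exists a complex
number `ξ` with `|ξ| = 1` such that `ξ^k = -1` for all `k ∈ S` if and only if all elements of
`S` have the same 2-adic valuation. -/
theorem prime_circle_weight_criterion (S : Finset ℤ) (hS : S.Nonempty)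
    (h0 : ∀ k ∈ S, k ≠ 0) :
    (∃ ξ : ℂ, ‖ξ‖ = 1 ∧ ∀ k ∈ S, ξ ^ k = -1) ↔
      ∀ k ∈ S, ∀ l ∈ S, padicValInt 2 k = padicValInt 2 l := by
  constructor
  · rintro ⟨ξ, -, hξ⟩ k hk l hl
    have hα : (-1 : ℂ) ≠ 1 := by norm_num
    exact le_antisymm
      (padicValInt_two_le_of_zpow_eq_neg_one hα (h0 l hl) (h0 k hk) (hξ l hl) (hξ k hk))
      (padicValInt_two_le_of_zpow_eq_neg_one hα (h0 k hk) (h0 l hl) (hξ k hk) (hξ l hl))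
  · intro hval
    obtain ⟨k₀, hk₀⟩ := hS
    obtain ⟨ξ, hξ, hξ_pow⟩ := exists_norm_eq_one_pow_two_pow_eq_neg_one (padicValInt 2 k₀)
    refine ⟨ξ, hξ, fun k hk => ?_⟩
    obtain ⟨m, hm, hkm⟩ := Int.exists_odd_eq_two_pow_padicValInt_mul (h0 k hk)
    rw [hkm, hval k hk k₀ hk₀, zpow_mul, ← Nat.cast_ofNat, ← Nat.cast_pow, zpow_natCast, hξ_pow,
      hm.neg_one_zpow]
end

section
/- Substituting g = ξ with ξ^{k_j} = -1 into the rational expression ∏_{j=1}^{r} (1 + g^{k_j} e^{-c_j})/(1 - g^{k_j} e^{-c_j}), viewed in a graded-commutative ℚ-algebra where each c_j is a nilpotent element of degree 2, yields (∏_{j=1}^r c_j) · u, where u is an invertible element (a unit) of the algebra. -/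
open Finset

/-- The truncated exponential `e^{-c} = Σ_{n<N} (-c)^n / n!`, which is the full exponential as
soon as `c^N = 0`. -/
noncomputable def expNeg {A : Type*} [CommRing A] [Algebra ℂ A] (c : A) (N : ℕ) : A :=
  ∑ n ∈ Finset.range N, algebraMap ℂ A ((-1) ^ n / n.factorial) * c ^ n

/-!
After the substitution `ξ^{k_j} = -1` each factor becomes `(1 - e^{-c})/(1 + e^{-c})`.
The numerator is `c · (1 - c/2 + ⋯)`, and `1 - c/2 + ⋯` is a unit because it is `1` plus a
nilpotent; the denominator is `2 - (1 - e^{-c})`, a unit plus a nilpotent. So each factor is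
`c` times a unit.
-/

theorem isUnit_sum_range_succ_mul_pow {R : Type*} [CommRing R] {c : R} (hc : IsNilpotent c)
    (a : ℕ → R) (ha : IsUnit (a 0)) (M : ℕ) :
    IsUnit (∑ n ∈ range (M + 1), a n * c ^ n) := by
  rw [sum_range_succ', pow_zero, mul_one]
  refine IsNilpotent.isUnit_add_right_of_commute ?_ ha (Commute.all _ _)
  exact isNilpotent_sum fun n _ ↦ (Commute.all _ _).isNilpotent_mul_left (hc.pow_succ n)

section expNeg

variable {A : Type*} [CommRing A] [Algebra ℂ A]

theorem expNeg_eq_of_pow_eq_zero {c : A} {N M : ℕ} (hc : c ^ N = 0) (hNM : N ≤ M) :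
    expNeg c M = expNeg c N := by
  refine (sum_subset (range_subset_range.mpr hNM) fun n _ hn ↦ ?_).symm
  rw [pow_eq_zero_of_le (not_lt.mp (mem_range.not.mp hn)) hc, mul_zero]

theorem one_sub_expNeg_succ (c : A) (M : ℕ) :
    1 - expNeg c (M + 1) =
      c * ∑ n ∈ range M, algebraMap ℂ A ((-1) ^ n / (n + 1).factorial) * c ^ n := by
  have hterm : ∀ n ∈ range M,
      algebraMap ℂ A ((-1) ^ (n + 1) / (n + 1).factorial) * c ^ (n + 1) =
        -(c * (algebraMap ℂ A ((-1) ^ n / (n + 1).factorial) * c ^ n)) := by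
    intro n _
    rw [pow_succ (-1 : ℂ), mul_neg_one, neg_div, map_neg, pow_succ]
    ring
  rw [expNeg, sum_range_succ', sum_congr rfl hterm, sum_neg_distrib, mul_sum]
  simp

theorem exists_unit_one_sub_expNeg_eq_mul {c : A} {N : ℕ} (hc : c ^ N = 0) :
    ∃ w : Aˣ, 1 - expNeg c N = c * w := by
  have hw := isUnit_sum_range_succ_mul_pow ⟨N, hc⟩
    (fun n ↦ algebraMap ℂ A ((-1) ^ n / (n + 1).factorial)) (by simp) N
  refine ⟨hw.unit, ?_⟩
  -- padding the truncation to `N + 2` terms keeps the constant term `1` of the cofactor even if `N ≤ 1`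
  rw [← expNeg_eq_of_pow_eq_zero hc (Nat.le_add_right N 2), one_sub_expNeg_succ, hw.unit_spec]

theorem isUnit_one_add_expNeg {c : A} {N : ℕ} (hc : c ^ N = 0) :
    IsUnit (1 + expNeg c N) := by
  obtain ⟨w, hw⟩ := exists_unit_one_sub_expNeg_eq_mul hc
  have htwo : IsUnit (2 : A) := by
    simpa only [map_ofNat] using
      (isUnit_iff_ne_zero.mpr (two_ne_zero : (2 : ℂ) ≠ 0)).map (algebraMap ℂ A)
  have hnil : IsNilpotent (-(c * w)) := ⟨N, by rw [neg_pow, mul_pow, hc, zero_mul, mul_zero]⟩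
  have hsplit : 1 + expNeg c N = 2 + -(c * w) := by rw [← hw]; ring
  exact hsplit ▸ hnil.isUnit_add_left_of_commute htwo (Commute.all _ _)

theorem exists_unit_one_sub_expNeg_mul_inverse_eq_mul {c : A} {N : ℕ} (hc : c ^ N = 0) :
    ∃ u : Aˣ, (1 - expNeg c N) * Ring.inverse (1 + expNeg c N) = c * u := by
  obtain ⟨w, hw⟩ := exists_unit_one_sub_expNeg_eq_mul hc
  obtain ⟨d, hd⟩ := isUnit_one_add_expNeg hc
  refine ⟨w * d⁻¹, ?_⟩
  rw [hw, ← hd, Ring.inverse_unit, Units.val_mul, mul_assoc]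

end expNeg

/-- Substituting `g = ξ` with `ξ^{k_j} = -1` into
`∏_j (1 + g^{k_j} e^{-c_j})/(1 - g^{k_j} e^{-c_j})`, in a (graded-)commutative algebra where
each `c_j` is nilpotent (of degree 2), yields `(∏_j c_j) · u` with `u` a unit: indeed each
factor becomes `(1 - e^{-c_j})/(1 + e^{-c_j})`, whose numerator is `c_j · (unit)` and whose
denominator `2 + (nilpotent)` is a unit. -/
theorem prime_substitution_extracts_euler_class
    {A : Type*} [CommRing A] [Algebra ℂ A] (r N : ℕ)
    (c : Fin r → A) (hc : ∀ j, c j ^ N = 0)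
    (k : Fin r → ℤ) (ξ : ℂ) (hξ : ∀ j, ξ ^ k j = -1) :
    ∃ u : Aˣ,
      (∏ j, (1 + algebraMap ℂ A (ξ ^ k j) * expNeg (c j) N) *
        Ring.inverse (1 - algebraMap ℂ A (ξ ^ k j) * expNeg (c j) N)) =
      (∏ j, c j) * (u : A) := by
  have hfactor : ∀ j, ∃ u : Aˣ,
      (1 + algebraMap ℂ A (ξ ^ k j) * expNeg (c j) N) *
        Ring.inverse (1 - algebraMap ℂ A (ξ ^ k j) * expNeg (c j) N) = c j * u := by
    intro j
    rw [hξ j, map_neg, map_one, neg_one_mul, sub_neg_eq_add, ← sub_eq_add_neg]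
    exact exists_unit_one_sub_expNeg_mul_inverse_eq_mul (hc j)
  choose u hu using hfactor
  refine ⟨∏ j, u j, ?_⟩
  rw [prod_congr rfl fun j _ ↦ hu j, prod_mul_distrib, Units.coe_prod]
end
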